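/- arXiv:1901.10834 — 2 statements merged into one kernel-verified Lean document; each statement's English description precedes it below -/
import Mathlib

section
/- Let l be a bilinear form on ℤ^{2g} satisfying l(b,a) = l(a,b) + ⟨a,b⟩ for the standard symplectic form, and suppose l(z_i, A) = 0 and l(A, x_j) = 0 for all A, i, j, where z_i = -x_i - Σ_j Q_{ij}y_j for a unimodular symmetric matrix Q. Then l(x_i, z_j) = Q_{ij}, l(x_i, y_j) = -δ_{ij}, and the matrix (l(y_i, y_j)) equals Q^{-1}. -/
/-- `ℤ^{2g}` with its standard symplectic basis, as pairs of coordinate vectors. -/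
abbrev SympZ (g : ℕ) := (Fin g → ℤ) × (Fin g → ℤ)

/-- The standard symplectic form: `⟨x_i, y_j⟩ = δ_{ij}`. -/
def symp {g : ℕ} (u v : SympZ g) : ℤ := ∑ i, (u.1 i * v.2 i - u.2 i * v.1 i)

/-- The basis vector `x_i`. -/
def xv {g : ℕ} (i : Fin g) : SympZ g := (Pi.single i 1, 0)

/-- The basis vector `y_i`. -/
def yv {g : ℕ} (i : Fin g) : SympZ g := (0, Pi.single i 1)

/-- `z_i = -x_i - Σ_j Q_{ij} y_j`. -/
def zv {g : ℕ} (Q : Matrix (Fin g) (Fin g) ℤ) (i : Fin g) : SympZ g :=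
  -(xv i) - ∑ j, Q i j • yv j

/-- a bilinear form `l` with symmetry defect the symplectic form, vanishing
in the first slot on the `z_i` and in the second slot on the `x_j`, for unimodular
symmetric `Q`, satisfies `l(x_i,z_j) = Q_{ij}`, `l(x_i,y_j) = -δ_{ij}`, and the matrix
`(l(y_i,y_j))` equals `Q⁻¹`. -/
theorem stmt_5 (g : ℕ) (Q : Matrix (Fin g) (Fin g) ℤ)
    (hsymmQ : Q.IsSymm) (hdet : Q.det = 1 ∨ Q.det = -1)
    (l : SympZ g → SympZ g → ℤ)
    (hadd_left : ∀ a b c, l (a + b) c = l a c + l b c)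
    (hadd_right : ∀ a b c, l a (b + c) = l a b + l a c)
    (hsymm : ∀ a b, l b a = l a b + symp a b)
    (hz : ∀ i A, l (zv Q i) A = 0)
    (hx : ∀ (A : SympZ g) j, l A (xv j) = 0) :
    (∀ i j, l (xv i) (zv Q j) = Q i j) ∧
    (∀ i j, l (xv i) (yv j) = -(if i = j then 1 else 0)) ∧
    (Matrix.of fun i j => l (yv i) (yv j)) = Q⁻¹ := by

  -- `l` as additive homs in each slot
  set L : SympZ g → SympZ g →+ ℤ := fun b => AddMonoidHom.mk' (fun a => l a b)
    (fun x y => hadd_left x y b) with hLdef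
  set R : SympZ g → SympZ g →+ ℤ := fun a => AddMonoidHom.mk' (l a) (hadd_right a) with hRdef
  have hLa : ∀ a b, L b a = l a b := fun a b => rfl
  have hRa : ∀ a b, R a b = l a b := fun a b => rfl
  -- l (x_i) A = symp A (x_i)
  have key2 : ∀ (A : SympZ g) (i : Fin g), l (xv i) A = symp A (xv i) := by
    intro A i
    rw [hsymm A (xv i), hx A i, zero_add]
  have hsymp_yx : ∀ i j : Fin g, symp (yv j) (xv i) = -(if i = j then 1 else 0) := by
    intro i j
    simp [symp, yv, xv, Pi.single_apply, eq_comm]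
  have hsymp_xx : ∀ i j : Fin g, symp (xv j) (xv i) = 0 := by
    intro i j
    simp [symp, xv]
  have hxy : ∀ i j, l (xv i) (yv j) = -(if i = j then 1 else 0) := by
    intro i j
    rw [key2 (yv j) i, hsymp_yx]
  have hxx : ∀ i j, l (xv i) (xv j) = 0 := by
    intro i j
    rw [key2 (xv j) i, hsymp_xx]
  -- expand hz
  have key1 : ∀ (i : Fin g) (A : SympZ g),
      l (xv i) A + ∑ j, Q i j * l (yv j) A = 0 := by
    intro i A
    have h0 := hz i A
    have : L A (zv Q i) = 0 := h0
    rw [zv, map_sub, map_neg, map_sum] at this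
    simp only [map_zsmul, smul_eq_mul] at this
    simp only [hLa] at this
    linarith [this]
  -- l(x_i, z_j) = Q i j
  have part1 : ∀ i j, l (xv i) (zv Q j) = Q i j := by
    intro i j
    have : R (xv i) (zv Q j) = Q i j := by
      rw [zv, map_sub, map_neg, map_sum]
      simp only [map_zsmul, smul_eq_mul]
      simp only [hRa, hxx, hxy, neg_zero, zero_sub, mul_neg, mul_ite, mul_one,
        mul_zero, neg_neg, Finset.sum_neg_distrib]
      rw [Finset.sum_ite_eq (Finset.univ : Finset (Fin g)) i (fun k => Q j k)]
      simp [← hsymmQ.apply i j]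
    exact this
  refine ⟨part1, hxy, ?_⟩
  -- Q * M = 1
  have hQM : Q * (Matrix.of fun i j => l (yv i) (yv j)) = 1 := by
    ext i k
    have h := key1 i (yv k)
    rw [hxy i k] at h
    simp only [Matrix.mul_apply, Matrix.of_apply, Matrix.one_apply]
    linarith [h]
  rw [Matrix.inv_eq_right_inv hQM]
end

section
/- Let V be a 2g-dimensional 𝔽₂-vector space with symplectic basis {a_i, b_i}, q a quadratic enhancement of the symplectic form, and define Arf(q) = Σ_{i=1}^g q(a_i)q(b_i) ∈ 𝔽₂. If q and q' are two quadratic enhancements of the same symplectic form that agree on all of V, then their Arf invariants computed with respect to any two symplectic bases agree; in particular Arf(q) is independent of the choice of symplectic basis. -/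
def sgn : ZMod 2 → ℤ := fun t => if t = 0 then 1 else -1

lemma sgn_add (s t : ZMod 2) : sgn (s + t) = sgn s * sgn t := by revert s t; decide

lemma sgn_inj (s t : ZMod 2) (h : sgn s = sgn t) : s = t := by revert s t; decide

lemma factor_sum (s t : ZMod 2) :
    ∑ p : ZMod 2 × ZMod 2, sgn (p.1 * s + p.2 * t + p.1 * p.2) = 2 * sgn (s * t) := by
  revert s t; decide

lemma sgn_sum {ι : Type*} (s : Finset ι) (f : ι → ZMod 2) :
    sgn (∑ i ∈ s, f i) = ∏ i ∈ s, sgn (f i) := by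
  classical
  induction s using Finset.induction with
  | empty => simp [sgn]
  | insert _ _ h ih => rw [Finset.sum_insert h, Finset.prod_insert h, sgn_add, ih]

lemma q_sum_orth {V : Type*} [AddCommGroup V] [Module (ZMod 2) V]
    (B : V →ₗ[ZMod 2] V →ₗ[ZMod 2] ZMod 2) (q : V → ZMod 2)
    (hq : ∀ x y, q (x + y) = q x + q y + B x y) (q0 : q 0 = 0)
    {ι : Type*} (s : Finset ι) (u : ι → V)
    (horth : ∀ i j, i ≠ j → B (u i) (u j) = 0) :
    q (∑ i ∈ s, u i) = ∑ i ∈ s, q (u i) := by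
  classical
  induction s using Finset.induction with
  | empty => simpa using q0
  | @insert i s hi ih =>
    rw [Finset.sum_insert hi, Finset.sum_insert hi, hq, ih]
    have : B (u i) (∑ j ∈ s, u j) = 0 := by
      rw [map_sum]
      exact Finset.sum_eq_zero fun j hj => horth i j (fun h => hi (h ▸ hj))
    rw [this, add_zero]

lemma gauss {V : Type*} [AddCommGroup V] [Module (ZMod 2) V] [Fintype V] (g : ℕ)
    (hdim : Module.finrank (ZMod 2) V = 2 * g)
    (B : V →ₗ[ZMod 2] V →ₗ[ZMod 2] ZMod 2)
    (q : V → ZMod 2)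
    (hq : ∀ x y, q (x + y) = q x + q y + B x y)
    (hsymm : ∀ x y, B x y = B y x)
    (a b : Fin g → V)
    (hab : ∀ i j, B (a i) (b j) = if i = j then 1 else 0)
    (haa : ∀ i j, B (a i) (a j) = 0)
    (hbb : ∀ i j, B (b i) (b j) = 0)
    (hspan : Submodule.span (ZMod 2) (Set.range a ∪ Set.range b) = ⊤) :
    ∑ v : V, sgn (q v) = 2 ^ g * sgn (∑ i, q (a i) * q (b i)) := by
  classical
  have q0 : q 0 = 0 := by
    have h := hq 0 0
    simp only [add_zero, map_zero, LinearMap.zero_apply] at h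
    have : q 0 + q 0 = q 0 + 0 := by rw [add_zero]; exact h.symm
    exact add_left_cancel this
  -- the basis
  have hle : ⊤ ≤ Submodule.span (ZMod 2) (Set.range (Sum.elim a b)) := by
    rw [Set.Sum.elim_range, hspan]
  have hcard : Fintype.card (Fin g ⊕ Fin g) = Module.finrank (ZMod 2) V := by
    simp [hdim, two_mul]
  let cb := basisOfTopLeSpanOfCardEqFinrank (Sum.elim a b) hle hcard
  have hcb : ∀ j, cb j = Sum.elim a b j := fun j => by
    rw [coe_basisOfTopLeSpanOfCardEqFinrank]
  let ψ : (Fin g → ZMod 2 × ZMod 2) ≃ (Fin g ⊕ Fin g → ZMod 2) :=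
    { toFun := fun h => Sum.elim (fun i => (h i).1) (fun i => (h i).2)
      invFun := fun f i => (f (.inl i), f (.inr i))
      left_inv := fun h => rfl
      right_inv := fun f => by funext j; cases j <;> rfl }
  let Φ : (Fin g → ZMod 2 × ZMod 2) ≃ V := ψ.trans cb.equivFun.symm.toEquiv
  rw [← Equiv.sum_comp Φ (fun v => sgn (q v))]
  -- compute q (Φ h)
  have key : ∀ h : Fin g → ZMod 2 × ZMod 2,
      q (Φ h) = ∑ i, ((h i).1 * q (a i) + (h i).2 * q (b i) + (h i).1 * (h i).2) := by
    intro h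
    have hΦ : Φ h = ∑ i, ((h i).1 • a i + (h i).2 • b i) := by
      show cb.equivFun.symm (ψ h) = _
      rw [Module.Basis.equivFun_symm_apply]
      rw [Fintype.sum_sum_type]
      rw [← Finset.sum_add_distrib]
      congr 1
      funext i
      rw [hcb, hcb]
      rfl
    rw [hΦ]
    set u : Fin g → V := fun i => (h i).1 • a i + (h i).2 • b i with hu
    have horth : ∀ i j, i ≠ j → B (u i) (u j) = 0 := by
      intro i j hij
      have hba : B (b i) (a j) = 0 := by
        rw [hsymm, hab, if_neg (fun hh => hij hh.symm)]
      simp only [hu, map_add, map_smul, LinearMap.add_apply, LinearMap.smul_apply,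
        haa, hbb, hba]
      rw [hab]
      simp [hij]
    rw [q_sum_orth B q hq q0 Finset.univ u horth]
    congr 1
    funext i
    have h2 : ∀ c : ZMod 2, c = 0 ∨ c = 1 := by decide
    rcases h2 (h i).1 with h1 | h1 <;> rcases h2 (h i).2 with hh2 | hh2 <;>
      simp only [hu, h1, hh2, zero_smul, one_smul, zero_add, add_zero, zero_mul, one_mul,
        mul_zero, mul_one, q0] <;>
      first
      | rfl
      | (rw [hq, hab]; simp)
  calc ∑ h : Fin g → ZMod 2 × ZMod 2, sgn (q (Φ h))
      = ∑ h : Fin g → ZMod 2 × ZMod 2,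
          ∏ i, sgn ((h i).1 * q (a i) + (h i).2 * q (b i) + (h i).1 * (h i).2) := by
        refine Finset.sum_congr rfl fun h _ => ?_
        rw [key h, sgn_sum]
    _ = ∏ i, ∑ p : ZMod 2 × ZMod 2, sgn (p.1 * q (a i) + p.2 * q (b i) + p.1 * p.2) := by
        rw [Finset.prod_univ_sum]
        rw [Fintype.piFinset_univ]
    _ = ∏ i : Fin g, (2 * sgn (q (a i) * q (b i))) := by
        exact Finset.prod_congr rfl fun i _ => factor_sum _ _
    _ = 2 ^ g * sgn (∑ i, q (a i) * q (b i)) := by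
        rw [Finset.prod_mul_distrib, Finset.prod_const, sgn_sum]
        simp

/-- the Arf invariant `Σ q(a_i)q(b_i)` of a quadratic enhancement `q` of a
symplectic form on a `2g`-dimensional 𝔽₂-vector space does not depend on the choice of
symplectic basis. -/
theorem stmt_7 {V : Type*} [AddCommGroup V] [Module (ZMod 2) V] (g : ℕ)
    (hdim : Module.finrank (ZMod 2) V = 2 * g)
    (B : V →ₗ[ZMod 2] V →ₗ[ZMod 2] ZMod 2)
    (q : V → ZMod 2)
    (hq : ∀ x y, q (x + y) = q x + q y + B x y)
    (a b a' b' : Fin g → V)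
    -- (a, b) is a symplectic basis
    (hab : ∀ i j, B (a i) (b j) = if i = j then 1 else 0)
    (haa : ∀ i j, B (a i) (a j) = 0)
    (hbb : ∀ i j, B (b i) (b j) = 0)
    (hspan : Submodule.span (ZMod 2) (Set.range a ∪ Set.range b) = ⊤)
    -- (a', b') is a symplectic basis
    (hab' : ∀ i j, B (a' i) (b' j) = if i = j then 1 else 0)
    (haa' : ∀ i j, B (a' i) (a' j) = 0)
    (hbb' : ∀ i j, B (b' i) (b' j) = 0)
    (hspan' : Submodule.span (ZMod 2) (Set.range a' ∪ Set.range b') = ⊤) :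
    ∑ i, q (a i) * q (b i) = ∑ i, q (a' i) * q (b' i) := by
  rcases Nat.eq_zero_or_pos g with hg | hg
  · subst hg; simp
  have hfd : Module.Finite (ZMod 2) V :=
    Module.finite_of_finrank_pos (by rw [hdim]; omega)
  have hfin : Finite V := Module.finite_of_finite (ZMod 2)
  cases nonempty_fintype V
  have hsymm : ∀ x y, B x y = B y x := by
    intro x y
    have h1 := hq x y
    have h2 := hq y x
    rw [add_comm y x, add_comm (q y) (q x)] at h2
    exact add_left_cancel (h1.symm.trans h2)
  have G1 := gauss g hdim B q hq hsymm a b hab haa hbb hspan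
  have G2 := gauss g hdim B q hq hsymm a' b' hab' haa' hbb' hspan'
  have h2g : (2 : ℤ) ^ g ≠ 0 := by positivity
  exact sgn_inj _ _ (mul_left_cancel₀ h2g (G1.symm.trans G2))
end
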